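/- arXiv:2211.00084 — 2 statements merged into one kernel-verified Lean document; each statement's English description precedes it below -/
import Mathlib

section
/- Let β_max ≥ 0, c_max > 0 and Δx > 0 be real numbers, and let β, c, k be real numbers with 0 ≤ β ≤ β_max, |c| ≤ c_max and |k| ≤ 1/Δx. Then every eigenvalue λ of the 3×3 complex matrix M = [[0, c²·i·k, −c²], [i·k, −β, 0], [0, β·i·k, −β]] satisfies −β_max ≤ Re(λ) ≤ 0 and |Im(λ)| ≤ c_max/Δx; that is, the spectrum of the PML wave operator symbol is contained in the rectangle [−β_max, 0] × i·[−c_max/Δx, c_max/Δx]. -/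
open Complex

def pmlSymbol (β c k : ℝ) : Matrix (Fin 3) (Fin 3) ℂ :=
  !![0, (c : ℂ) ^ 2 * I * (k : ℂ), -(c : ℂ) ^ 2;
     I * (k : ℂ), -(β : ℂ), 0;
     0, (β : ℂ) * I * (k : ℂ), -(β : ℂ)]

theorem pmlSymbol_charpoly_eval (β c k : ℝ) (μ : ℂ) :
    (pmlSymbol β c k).charpoly.eval μ
      = μ * (μ - (-β + I * (c * k))) * (μ - (-β - I * (c * k))) := by
  rw [Matrix.eval_charpoly, Matrix.det_fin_three]
  simp only [pmlSymbol, Matrix.scalar_apply, Matrix.sub_apply, Matrix.diagonal_apply,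
    Matrix.of_apply, Matrix.cons_val', Matrix.cons_val, Matrix.cons_val_fin_one, Fin.reduceEq,
    if_true, if_false]
  ring

theorem spectrum_pmlSymbol (β c k : ℝ) :
    spectrum ℂ (pmlSymbol β c k) = {0, -β + I * (c * k), -β - I * (c * k)} := by
  ext μ
  rw [Matrix.mem_spectrum_iff_isRoot_charpoly, Polynomial.IsRoot.def, pmlSymbol_charpoly_eval]
  simp only [mul_eq_zero, sub_eq_zero, Set.mem_insert_iff, Set.mem_singleton_iff, or_assoc]

theorem re_and_abs_im_of_mem_spectrum_pmlSymbol {β c k : ℝ} {μ : ℂ}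
    (hμ : μ ∈ spectrum ℂ (pmlSymbol β c k)) :
    (μ.re = 0 ∨ μ.re = -β) ∧ |μ.im| ≤ |c * k| := by
  rw [spectrum_pmlSymbol] at hμ
  rcases hμ with rfl | rfl | rfl <;> simp [abs_mul, mul_nonneg]

theorem pml_symbol_spectrum_in_rectangle_general (βmax cmax Δx β c k : ℝ)
    (hβ0 : 0 ≤ β) (hβ : β ≤ βmax) (hc : |c| ≤ cmax) (hk : |k| ≤ 1 / Δx)
    (μ : ℂ)
    (hμ : μ ∈ spectrum ℂ
        (!![0, (c : ℂ) ^ 2 * Complex.I * (k : ℂ), -(c : ℂ) ^ 2;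
            Complex.I * (k : ℂ), -(β : ℂ), 0;
            0, (β : ℂ) * Complex.I * (k : ℂ), -(β : ℂ)])) :
    -βmax ≤ μ.re ∧ μ.re ≤ 0 ∧ |μ.im| ≤ cmax / Δx := by
  obtain ⟨hre, him⟩ := re_and_abs_im_of_mem_spectrum_pmlSymbol (β := β) (c := c) (k := k) hμ
  have hck : |c * k| ≤ cmax / Δx := by
    rw [abs_mul, div_eq_mul_one_div]
    exact mul_le_mul hc hk (abs_nonneg k) ((abs_nonneg c).trans hc)
  refine ⟨?_, ?_, him.trans hck⟩ <;> rcases hre with hre | hre <;> linarith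

/-- The spectrum of the PML wave operator symbol is contained in the rectangle
`[−β_max, 0] × i[−c_max/Δx, c_max/Δx]`. -/
theorem pml_symbol_spectrum_in_rectangle (βmax cmax Δx β c k : ℝ)
    (hβmax : 0 ≤ βmax) (hcmax : 0 < cmax) (hΔx : 0 < Δx)
    (hβ0 : 0 ≤ β) (hβ : β ≤ βmax) (hc : |c| ≤ cmax) (hk : |k| ≤ 1 / Δx)
    (μ : ℂ)
    (hμ : μ ∈ spectrum ℂ
        (!![0, (c : ℂ) ^ 2 * Complex.I * (k : ℂ), -(c : ℂ) ^ 2;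
            Complex.I * (k : ℂ), -(β : ℂ), 0;
            0, (β : ℂ) * Complex.I * (k : ℂ), -(β : ℂ)])) :
    -βmax ≤ μ.re ∧ μ.re ≤ 0 ∧ |μ.im| ≤ cmax / Δx :=
  pml_symbol_spectrum_in_rectangle_general βmax cmax Δx β c k hβ0 hβ hc hk μ hμ
end

section
/- Let γ, c_f, d be complex numbers with γ ≠ 0. Then for every real t, the Faber series of the exponential converges at the point ψ(e^{it}) of the ellipse to the exponential: Σ_{j=0}^{∞} a_j·F_j(ψ(e^{it})) = exp(ψ(e^{it})). -/
/-!
For `w ≠ 0`, `exp (ψ w) = e^d · exp (γ w) · exp (c_f² / (4 γ) · w⁻¹)` is an absolutely convergent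
double series in `w` and `w⁻¹`; grouping its terms by the exponent `m - k` gives a Laurent series
`∑ₙ Lₙ wⁿ` with summable coefficients. On the unit circle this is a Fourier series, so integrating
termwise gives `a_j = L_j`, while comparing terms gives `L_{-j} = c₁^j L_j`. Since
`ψ(w)/γ - d/γ = w + c₁/w`, the Faber recurrence yields `F_j(ψ(w)) = w^j + c₁^j w^{-j}` for `j ≥ 1`,
so `a_j F_j(ψ(w)) = L_j w^j + L_{-j} w^{-j}`, and the claim is the Laurent series with `n` and `-n`
paired.
-/

/-- The Faber polynomials associated with parameters `γ`, `cf`, `d`. -/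
noncomputable def faber (γ cf d : ℂ) : ℕ → ℂ → ℂ
  | 0 => fun _ => 1
  | 1 => fun z => z / γ - d / γ
  | 2 => fun z => (z / γ - d / γ) ^ 2 - 2 * (cf ^ 2 / (4 * γ ^ 2))
  | n + 3 => fun z =>
      (z / γ - d / γ) * faber γ cf d (n + 2) z - cf ^ 2 / (4 * γ ^ 2) * faber γ cf d (n + 1) z

/-- The conformal map associated with the Faber polynomials. -/
noncomputable def faberPsi (γ cf d : ℂ) (w : ℂ) : ℂ :=
  γ * w + d + cf ^ 2 / (4 * γ * w)

/-- The Faber coefficients of the exponential function. -/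
noncomputable def faberCoeff (γ cf d : ℂ) (j : ℕ) : ℂ :=
  (1 / (2 * (Real.pi : ℂ))) * ∫ θ in (0 : ℝ)..(2 * Real.pi),
    Complex.exp (faberPsi γ cf d (Complex.exp ((θ : ℂ) * Complex.I))) *
      Complex.exp (-(Complex.I * (j : ℂ) * (θ : ℂ)))

open Complex
open scoped Real Nat

theorem summable_norm_pow_div_factorial (x : ℂ) : Summable fun n => ‖x ^ n / (n ! : ℂ)‖ := by
  simpa [norm_div, norm_pow] using Real.summable_pow_div_factorial ‖x‖

theorem hasSum_pow_div_factorial (x : ℂ) : HasSum (fun n => x ^ n / n !) (exp x) := by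
  rw [exp_eq_exp_ℂ]
  exact NormedSpace.expSeries_div_hasSum_exp x

theorem summable_norm_prod_pow_div_factorial (x y : ℂ) :
    Summable fun p : ℕ × ℕ => ‖x ^ p.1 / p.1 ! * (y ^ p.2 / p.2 !)‖ := by
  simp only [norm_mul]
  exact (summable_norm_pow_div_factorial x).mul_of_nonneg (summable_norm_pow_div_factorial y)
    (fun _ => norm_nonneg _) fun _ => norm_nonneg _

theorem hasSum_prod_pow_div_factorial (x y : ℂ) :
    HasSum (fun p : ℕ × ℕ => x ^ p.1 / p.1 ! * (y ^ p.2 / p.2 !)) (exp (x + y)) := by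
  rw [exp_add]
  exact HasSum.mul (f := fun m : ℕ => x ^ m / (m ! : ℂ)) (g := fun k : ℕ => y ^ k / (k ! : ℂ))
    (hasSum_pow_div_factorial x) (hasSum_pow_div_factorial y)
    (summable_norm_prod_pow_div_factorial x y).of_norm

theorem integral_exp_int_mul_I (n : ℤ) :
    ∫ θ in (0 : ℝ)..2 * π, exp (n * θ * I) = if n = 0 then 2 * π else 0 := by
  split_ifs with hn
  · simp [hn]
  · have hnI : (n : ℂ) * I ≠ 0 := mul_ne_zero (Int.cast_ne_zero.mpr hn) I_ne_zero
    have hperiod : exp (n * I * (2 * π : ℝ)) = 1 := by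
      rw [← exp_int_mul_two_pi_mul_I n]; push_cast; ring_nf
    simp_rw [mul_right_comm _ _ I]
    rw [integral_exp_mul_complex hnI, hperiod]
    simp

theorem one_div_two_pi_mul_integral_eq_of_hasSum {L : ℤ → ℂ} {f : ℝ → ℂ}
    (hL : Summable fun n => ‖L n‖)
    (hf : ∀ θ : ℝ, HasSum (fun n => L n * exp (n * θ * I)) (f θ)) (j : ℤ) :
    1 / (2 * π) * ∫ θ in (0 : ℝ)..2 * π, f θ * exp (-(I * j * θ)) = L j := by
  have hterm : ∀ n : ℤ, ∫ θ in (0 : ℝ)..2 * π, L n * exp (n * θ * I) * exp (-(I * j * θ)) =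
      if n = j then 2 * π * L j else 0 := by
    intro n
    have hexp : ∀ θ : ℝ, L n * exp (n * θ * I) * exp (-(I * j * θ)) =
        L n * exp ((n - j : ℤ) * θ * I) := fun θ => by
      rw [mul_assoc, ← exp_add]; push_cast; ring_nf
    simp_rw [hexp, intervalIntegral.integral_const_mul, integral_exp_int_mul_I, sub_eq_zero]
    split_ifs with h <;> simp [h, mul_comm]
  have hsum : HasSum (fun n : ℤ => if n = j then 2 * π * L j else 0)
      (∫ θ in (0 : ℝ)..2 * π, f θ * exp (-(I * j * θ))) := by
    simp_rw [← hterm]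
    refine intervalIntegral.hasSum_integral_of_dominated_convergence (fun n _ => ‖L n‖)
      (fun n => by fun_prop) (fun n => .of_forall fun θ _ => ?_) (.of_forall fun _ _ => hL)
      intervalIntegrable_const (.of_forall fun θ _ => (hf θ).mul_right _)
    simp [Complex.norm_exp]
  rw [hsum.unique (hasSum_ite_eq j _)]
  field_simp

/-- `(n, k) ↦ (k + n⁺, k + n⁻)` enumerates the pairs `(m, k')` with `m - k' = n`. -/
def natProdEquiv : ℤ × ℕ ≃ ℕ × ℕ where
  toFun p := (p.2 + p.1.toNat, p.2 + (-p.1).toNat)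
  invFun q := ((q.1 : ℤ) - q.2, min q.1 q.2)
  left_inv p := by ext <;> simp; omega
  right_inv q := by ext <;> simp <;> omega

theorem pow_natProdEquiv_mul_inv_pow {G₀ : Type*} [GroupWithZero G₀] {w : G₀} (hw : w ≠ 0) (p : ℤ × ℕ) :
    w ^ (natProdEquiv p).1 * w⁻¹ ^ (natProdEquiv p).2 = w ^ p.1 := by
  rw [inv_pow, ← zpow_natCast, ← zpow_natCast, ← zpow_neg, ← zpow_add₀ hw]
  simp only [natProdEquiv, Equiv.coe_fn_mk]
  congr 1
  omega

section ExpPsi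

variable (γ cf d : ℂ)

noncomputable def expPsiCoeff (p : ℕ × ℕ) : ℂ :=
  exp d * (γ ^ p.1 / p.1 ! * ((cf ^ 2 / (4 * γ)) ^ p.2 / p.2 !))

noncomputable def expPsiLaurentCoeff (n : ℤ) : ℂ :=
  ∑' k, expPsiCoeff γ cf d (natProdEquiv (n, k))

theorem summable_norm_expPsiCoeff : Summable fun p => ‖expPsiCoeff γ cf d p‖ := by
  simp only [expPsiCoeff, norm_mul (exp d)]
  exact (summable_norm_prod_pow_div_factorial _ _).mul_left _

theorem hasSum_expPsiCoeff (w : ℂ) :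
    HasSum (fun p : ℕ × ℕ => expPsiCoeff γ cf d p * (w ^ p.1 * w⁻¹ ^ p.2))
      (exp (faberPsi γ cf d w)) := by
  have hψ : faberPsi γ cf d w = d + (γ * w + cf ^ 2 / (4 * γ) * w⁻¹) := by
    rw [faberPsi, ← div_eq_mul_inv, div_div]; ring
  rw [hψ, exp_add]
  refine ((hasSum_prod_pow_div_factorial _ _).mul_left (exp d)).congr_fun fun p => ?_
  simp only [expPsiCoeff, mul_pow]
  ring

theorem summable_norm_expPsiLaurentCoeff :
    Summable fun n => ‖expPsiLaurentCoeff γ cf d n‖ := by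
  have h := (summable_norm_expPsiCoeff γ cf d).comp_injective natProdEquiv.injective
  exact .of_nonneg_of_le (fun _ => norm_nonneg _)
    (fun n => norm_tsum_le_tsum_norm (h.prod_factor n)) h.prod

theorem hasSum_expPsiLaurentCoeff {w : ℂ} (hw : w ≠ 0) :
    HasSum (fun n : ℤ => expPsiLaurentCoeff γ cf d n * w ^ n) (exp (faberPsi γ cf d w)) := by
  have h := natProdEquiv.hasSum_iff.mpr (hasSum_expPsiCoeff γ cf d w)
  refine h.prod_fiberwise fun n => ?_
  simp only [Function.comp_apply, pow_natProdEquiv_mul_inv_pow hw]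
  have hκ := (summable_norm_expPsiCoeff γ cf d).comp_injective natProdEquiv.injective
  exact (hκ.prod_factor n).of_norm.hasSum.mul_right _

theorem faberCoeff_eq_expPsiLaurentCoeff (j : ℕ) :
    faberCoeff γ cf d j = expPsiLaurentCoeff γ cf d j := by
  have hf (θ : ℝ) : HasSum (fun n : ℤ => expPsiLaurentCoeff γ cf d n * exp (n * θ * I))
      (exp (faberPsi γ cf d (exp (θ * I)))) := by
    simp_rw [mul_assoc _ (θ : ℂ), exp_int_mul]
    exact hasSum_expPsiLaurentCoeff γ cf d (exp_ne_zero _)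
  rw [faberCoeff,
    ← one_div_two_pi_mul_integral_eq_of_hasSum (summable_norm_expPsiLaurentCoeff γ cf d) hf j]
  simp only [Int.cast_natCast]

theorem expPsiCoeff_swap (hγ : γ ≠ 0) (j k : ℕ) :
    expPsiCoeff γ cf d (k, k + j) =
      (cf ^ 2 / (4 * γ ^ 2)) ^ j * expPsiCoeff γ cf d (k + j, k) := by
  have hq : cf ^ 2 / (4 * γ) = cf ^ 2 / (4 * γ ^ 2) * γ := by field_simp
  simp only [expPsiCoeff, hq, mul_pow, pow_add]
  ring

theorem expPsiLaurentCoeff_neg (hγ : γ ≠ 0) (j : ℕ) :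
    expPsiLaurentCoeff γ cf d (-j) =
      (cf ^ 2 / (4 * γ ^ 2)) ^ j * expPsiLaurentCoeff γ cf d j := by
  simp only [expPsiLaurentCoeff, natProdEquiv, Equiv.coe_fn_mk, ← tsum_mul_left]
  simp [expPsiCoeff_swap γ cf d hγ]

theorem faber_faberPsi (hγ : γ ≠ 0) {w : ℂ} (hw : w ≠ 0) (j : ℕ) :
    faber γ cf d (j + 1) (faberPsi γ cf d w) =
      w ^ (j + 1) + (cf ^ 2 / (4 * γ ^ 2)) ^ (j + 1) * w⁻¹ ^ (j + 1) := by
  set c := cf ^ 2 / (4 * γ ^ 2)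
  have hw' : w * w⁻¹ = 1 := mul_inv_cancel₀ hw
  have hψ : faberPsi γ cf d w / γ - d / γ = w + c * w⁻¹ := by
    simp only [faberPsi, c]
    field_simp
    ring
  induction j using Nat.twoStepInduction with
  | zero => simp only [faber, hψ]; ring
  | one => simp only [faber, hψ]; linear_combination 2 * c * hw'
  | more n ih₁ ih₂ =>
    simp only [faber]
    rw [hψ, ih₁, ih₂]
    linear_combination (c * w ^ (n + 1) + c ^ (n + 2) * w⁻¹ ^ (n + 1)) * hw'

theorem faberCoeff_mul_faber_faberPsi (hγ : γ ≠ 0) {w : ℂ} (hw : w ≠ 0) (j : ℕ) :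
    faberCoeff γ cf d (j + 1) * faber γ cf d (j + 1) (faberPsi γ cf d w) =
      expPsiLaurentCoeff γ cf d (j + 1 : ℕ) * w ^ ((j + 1 : ℕ) : ℤ) +
        expPsiLaurentCoeff γ cf d (-(j + 1 : ℕ)) * w ^ (-((j + 1 : ℕ) : ℤ)) := by
  rw [faber_faberPsi γ cf d hγ hw, expPsiLaurentCoeff_neg γ cf d hγ,
    faberCoeff_eq_expPsiLaurentCoeff, zpow_neg, zpow_natCast, inv_pow]
  ring

end ExpPsi

/-- The Faber series of the exponential converges, at each point `ψ(e^{it})` of the ellipse,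
to the exponential. -/
theorem faber_series_hasSum_exp (γ cf d : ℂ) (hγ : γ ≠ 0) (t : ℝ) :
    HasSum
      (fun j : ℕ =>
        faberCoeff γ cf d j *
          faber γ cf d j (faberPsi γ cf d (Complex.exp (Complex.I * (t : ℂ)))))
      (Complex.exp (faberPsi γ cf d (Complex.exp (Complex.I * (t : ℂ))))) := by
  set w := exp (I * t)
  have hw : w ≠ 0 := exp_ne_zero _
  have h := ((hasSum_expPsiLaurentCoeff γ cf d hw).nat_add_neg).sub
    (hasSum_ite_eq 0 (expPsiLaurentCoeff γ cf d 0))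
  rw [zpow_zero, mul_one, add_sub_cancel_right] at h
  refine h.congr_fun fun j => ?_
  rcases j with _ | j
  · simp [faber, faberCoeff_eq_expPsiLaurentCoeff]
  · rw [faberCoeff_mul_faber_faberPsi γ cf d hγ hw, if_neg j.succ_ne_zero, sub_zero]
end
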